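/- arXiv:1512.01448 — 2 statements merged into one kernel-verified Lean document; each statement's English description precedes it below -/
import Mathlib

section
/- Let D be a digraph on vertex set V = {1,…,n}, let q ≥ 2 and p ≥ 1, and let f ∈ F(D,q). Then |Im(f^p)| ≤ q^{α_p(D)}. -/
open Function

/-- A `p`-walk in the digraph `D` on vertex set `Fin n`. -/
def IsPWalk {n : ℕ} (D : Fin n → Fin n → Prop) (p : ℕ) (w : Fin (p + 1) → Fin n) : Prop :=
  ∀ s : Fin p, D (w s.castSucc) (w s.succ)

/-- `alphaWalks D p` is the maximum number of pairwise independent `p`-walks in `D`. -/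
noncomputable def alphaWalks {n : ℕ} (D : Fin n → Fin n → Prop) (p : ℕ) : ℕ :=
  sSup {k : ℕ | ∃ W : Fin k → Fin (p + 1) → Fin n,
    (∀ i, IsPWalk D p (W i)) ∧ ∀ i j : Fin k, i ≠ j → ∀ s, W i s ≠ W j s}

/-- The interaction graph of an FDS: `(u,v)` is an arc iff `f_v` depends essentially on `x_u`. -/
def IG {n q : ℕ} (f : (Fin n → Fin q) → Fin n → Fin q) (u v : Fin n) : Prop :=
  ∃ x y : Fin n → Fin q, (∀ w : Fin n, w ≠ u → x w = y w) ∧ f x v ≠ f y v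

/-- Membership in `F[D,q]`: the interaction graph of `f` equals `D`. -/
def ExactIG {n q : ℕ} (D : Fin n → Fin n → Prop) (f : (Fin n → Fin q) → Fin n → Fin q) : Prop :=
  ∀ u v, IG f u v ↔ D u v

/-- Membership in `F(D,q)`: the interaction graph of `f` is contained in `D`. -/
def SubIG {n q : ℕ} (D : Fin n → Fin n → Prop) (f : (Fin n → Fin q) → Fin n → Fin q) : Prop :=
  ∀ u v, IG f u v → D u v

/-- A cycle of `D`, given by its list of (distinct) vertices, with arcs between consecutive
vertices, cyclically. A loop is a cycle with one vertex. -/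
def IsCycleList {n : ℕ} (D : Fin n → Fin n → Prop) (c : List (Fin n)) : Prop :=
  c ≠ [] ∧ c.Nodup ∧
    ∀ i : Fin c.length, D (c.get i) (c.get ⟨((i : ℕ) + 1) % c.length, Nat.mod_lt _ i.pos⟩)

/-- A path of `D`, given by its list of (distinct) vertices. -/
def IsPathList {n : ℕ} (D : Fin n → Fin n → Prop) (P : List (Fin n)) : Prop :=
  P.Nodup ∧ P.Chain' D

/-- `f^{(S)}`: update the coordinates in `S` only. -/
def applyBlock {n q : ℕ} (f : (Fin n → Fin q) → Fin n → Fin q) (S : Finset (Fin n))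
    (x : Fin n → Fin q) : Fin n → Fin q :=
  fun v => if v ∈ S then f x v else x v

/-- `f^σ = f^{(σ_t)} ∘ ⋯ ∘ f^{(σ_1)}`. -/
def applySchedule {n q : ℕ} (f : (Fin n → Fin q) → Fin n → Fin q)
    (σ : List (Finset (Fin n))) : (Fin n → Fin q) → Fin n → Fin q :=
  σ.foldl (fun g S => applyBlock f S ∘ g) id

/-- A block-sequential schedule: every vertex is updated exactly once. -/
def BlockSequential {n : ℕ} (σ : List (Finset (Fin n))) : Prop :=
  σ.Pairwise Disjoint ∧ ∀ v : Fin n, ∃ S ∈ σ, v ∈ S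

/-- A complete schedule: every vertex is updated at least once. -/
def CompleteSchedule {n : ℕ} (σ : List (Finset (Fin n))) : Prop :=
  ∀ v : Fin n, ∃ S ∈ σ, v ∈ S

/-- `T(D)`: the number of trivial strong components of `D`, i.e. the number of
vertices not lying on any cycle of `D`. -/
noncomputable def numTrivial {n : ℕ} (D : Fin n → Fin n → Prop) : ℕ :=
  Set.ncard {v : Fin n | ¬ ∃ c : List (Fin n), IsCycleList D c ∧ v ∈ c}

/-- All vertices of `D` can be covered by pairwise vertex-disjoint cycles. -/
def CoveredByDisjointCycles {n : ℕ} (D : Fin n → Fin n → Prop) : Prop :=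
  ∃ Cs : List (List (Fin n)), (∀ c ∈ Cs, IsCycleList D c) ∧
    Cs.Pairwise (fun a b => ∀ v ∈ a, v ∉ b) ∧ ∀ v : Fin n, ∃ c ∈ Cs, v ∈ c

/-!
In the time-expanded digraph, with a vertex `(t, v)` for every time `0 ≤ t ≤ p` and vertex `v`
and an arc `(t, u) → (t + 1, v)` for every arc `u → v` of `D`, the walks from layer `0` to
layer `p` are the `p`-walks of `D`, and vertex-disjoint ones are independent. Since `f_v` only
reads the in-neighbours of `v`, the values `(f^t x)_v` at the vertices `(t, v)` of any set `S`
meeting all these walks determine `f^p x`, so `|Im f^p| ≤ q^|S|`. By Menger's theorem, proved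
below by Göring's induction on the number of arcs, some such `S` has at most `α_p(D)` vertices.
-/

open Finset

variable {α : Type*}

/-- The values of `vert` beyond `length` are junk. -/
structure ArcWalk (E : Finset (α × α)) where
  length : ℕ
  vert : ℕ → α
  mem_arcs : ∀ t < length, (vert t, vert (t + 1)) ∈ E

namespace ArcWalk

variable {E F : Finset (α × α)}

def start (P : ArcWalk E) : α := P.vert 0

def finish (P : ArcWalk E) : α := P.vert P.length

def support (P : ArcWalk E) : Set α := P.vert '' Set.Iic P.length

lemma mem_support {P : ArcWalk E} {v : α} :
    v ∈ P.support ↔ ∃ t ≤ P.length, P.vert t = v := by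
  simp [support]

lemma vert_mem_support (P : ArcWalk E) {t : ℕ} (ht : t ≤ P.length) : P.vert t ∈ P.support :=
  mem_support.2 ⟨t, ht, rfl⟩

lemma start_mem_support (P : ArcWalk E) : P.start ∈ P.support :=
  P.vert_mem_support (Nat.zero_le _)

lemma finish_mem_support (P : ArcWalk E) : P.finish ∈ P.support :=
  P.vert_mem_support le_rfl

def AvoidsBeforeFinish (P : ArcWalk E) (X : Set α) : Prop :=
  ∀ t < P.length, P.vert t ∉ X

def AvoidsAfterStart (P : ArcWalk E) (X : Set α) : Prop :=
  ∀ t ≤ P.length, 0 < t → P.vert t ∉ X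

def nil (a : α) : ArcWalk E := ⟨0, fun _ ↦ a, fun _ h ↦ absurd h (Nat.not_lt_zero _)⟩

@[simp] lemma start_nil (a : α) : (nil a : ArcWalk E).start = a := rfl

@[simp] lemma finish_nil (a : α) : (nil a : ArcWalk E).finish = a := rfl

@[simp] lemma support_nil (a : α) : (nil a : ArcWalk E).support = {a} := by
  ext; simp [mem_support, nil, eq_comm]

def cons (a : α) (P : ArcWalk E) (h : (a, P.start) ∈ E) : ArcWalk E where
  length := P.length + 1
  vert
    | 0 => a
    | t + 1 => P.vert t
  mem_arcs
    | 0, _ => h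
    | t + 1, ht => P.mem_arcs t (by omega)

@[simp] lemma start_cons (a : α) (P : ArcWalk E) (h) : (P.cons a h).start = a := rfl

@[simp] lemma finish_cons (a : α) (P : ArcWalk E) (h) : (P.cons a h).finish = P.finish := rfl

lemma support_cons (a : α) (P : ArcWalk E) (h) : (P.cons a h).support = insert a P.support := by
  ext v
  simp only [mem_support, Set.mem_insert_iff]
  constructor
  · rintro ⟨_ | t, ht, rfl⟩
    · exact .inl rfl
    · exact .inr ⟨t, by simp [cons] at ht; omega, rfl⟩
  · rintro (rfl | ⟨t, ht, rfl⟩)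
    · exact ⟨0, Nat.zero_le _, rfl⟩
    · exact ⟨t + 1, by simp [cons]; omega, rfl⟩

def append (P Q : ArcWalk E) (h : P.finish = Q.start) : ArcWalk E where
  length := P.length + Q.length
  vert t := if t ≤ P.length then P.vert t else Q.vert (t - P.length)
  mem_arcs t ht := by
    split_ifs with h₁ h₂ h₂
    · exact P.mem_arcs t (by omega)
    · obtain rfl : t = P.length := by omega
      rw [show P.length + 1 - P.length = 0 + 1 by omega, ← finish, h]
      exact Q.mem_arcs 0 (by omega)
    · omega
    · rw [show t + 1 - P.length = t - P.length + 1 by omega]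
      exact Q.mem_arcs _ (by omega)

@[simp] lemma start_append (P Q : ArcWalk E) (h) : (P.append Q h).start = P.start := by
  simp [append, start]

@[simp] lemma finish_append (P Q : ArcWalk E) (h) : (P.append Q h).finish = Q.finish := by
  by_cases hQ : Q.length = 0
  · simp only [append, finish, hQ, add_zero, le_refl, ite_true]
    exact h
  · simp [append, finish, show ¬ P.length + Q.length ≤ P.length by omega]

lemma support_append (P Q : ArcWalk E) (h) : (P.append Q h).support = P.support ∪ Q.support := by
  ext v
  simp only [mem_support, Set.mem_union]
  constructor
  · rintro ⟨t, ht, rfl⟩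
    by_cases htP : t ≤ P.length
    · exact .inl ⟨t, htP, by simp [append, htP]⟩
    · exact .inr ⟨t - P.length, by simp [append] at ht; omega, by simp [append, htP]⟩
  · rintro (⟨t, ht, rfl⟩ | ⟨t, ht, rfl⟩)
    · exact ⟨t, by simp [append]; omega, by simp [append, ht]⟩
    · rcases Nat.eq_zero_or_pos t with rfl | ht0
      · refine ⟨P.length, by simp [append], ?_⟩
        simp only [append, le_refl, ite_true, Nat.sub_self]
        exact h
      · exact ⟨P.length + t, by simp [append]; omega,
          by simp [append, show ¬ P.length + t ≤ P.length by omega]⟩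

def take (P : ArcWalk E) (i : ℕ) (hi : i ≤ P.length) : ArcWalk E :=
  ⟨i, P.vert, fun t ht ↦ P.mem_arcs t (by omega)⟩

@[simp] lemma start_take (P : ArcWalk E) (i : ℕ) (hi) : (P.take i hi).start = P.start := rfl

@[simp] lemma finish_take (P : ArcWalk E) (i : ℕ) (hi) : (P.take i hi).finish = P.vert i := rfl

lemma support_take_subset (P : ArcWalk E) (i : ℕ) (hi) : (P.take i hi).support ⊆ P.support :=
  Set.image_mono (Set.Iic_subset_Iic.2 hi)

def drop (P : ArcWalk E) (i : ℕ) : ArcWalk E :=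
  ⟨P.length - i, fun t ↦ P.vert (i + t), fun t ht ↦ P.mem_arcs (i + t) (by omega)⟩

@[simp] lemma start_drop (P : ArcWalk E) (i : ℕ) : (P.drop i).start = P.vert i := rfl

lemma finish_drop (P : ArcWalk E) {i : ℕ} (hi : i ≤ P.length) :
    (P.drop i).finish = P.finish := by
  simp [drop, finish, Nat.add_sub_cancel' hi]

lemma support_drop_subset (P : ArcWalk E) {i : ℕ} (hi : i ≤ P.length) :
    (P.drop i).support ⊆ P.support := by
  rintro _ ⟨t, ht, rfl⟩
  exact P.vert_mem_support (by simp [drop] at ht; omega)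

def ofSubset (h : E ⊆ F) (P : ArcWalk E) : ArcWalk F :=
  ⟨P.length, P.vert, fun t ht ↦ h (P.mem_arcs t ht)⟩

@[simp] lemma start_ofSubset (h : E ⊆ F) (P : ArcWalk E) :
    (P.ofSubset h).start = P.start := rfl

@[simp] lemma finish_ofSubset (h : E ⊆ F) (P : ArcWalk E) :
    (P.ofSubset h).finish = P.finish := rfl

@[simp] lemma support_ofSubset (h : E ⊆ F) (P : ArcWalk E) :
    (P.ofSubset h).support = P.support := rfl

def ofErase [DecidableEq α] (P : ArcWalk E) {e : α × α}
    (h : ∀ t < P.length, (P.vert t, P.vert (t + 1)) ≠ e) : ArcWalk (E.erase e) :=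
  ⟨P.length, P.vert, fun t ht ↦ mem_erase.2 ⟨h t ht, P.mem_arcs t ht⟩⟩

lemma exists_join (P Q : ArcWalk E) (h : P.finish = Q.start ∨ (P.finish, Q.start) ∈ E) :
    ∃ R : ArcWalk E, R.start = P.start ∧ R.finish = Q.finish ∧
      R.support ⊆ P.support ∪ Q.support := by
  rcases h with h | h
  · exact ⟨P.append Q h, by simp, by simp, (support_append P Q h).le⟩
  · refine ⟨P.append (Q.cons P.finish h) (start_cons _ _ _).symm, by simp, by simp, ?_⟩
    rw [support_append, support_cons]
    exact Set.union_subset Set.subset_union_left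
      (Set.insert_subset (.inl P.finish_mem_support) Set.subset_union_right)

lemma exists_take_first (P : ArcWalk E) {X : Set α} (hX : ∃ t ≤ P.length, P.vert t ∈ X) :
    ∃ Q : ArcWalk E, Q.start = P.start ∧ Q.finish ∈ X ∧ Q.AvoidsBeforeFinish X ∧
      Q.support ⊆ P.support := by
  classical
  obtain ⟨hle, hmem⟩ := Nat.find_spec hX
  exact ⟨P.take _ hle, rfl, hmem,
    fun t (ht : t < Nat.find hX) htX ↦ Nat.find_min hX ht ⟨by omega, htX⟩,
    P.support_take_subset _ hle⟩

lemma exists_drop_last (P : ArcWalk E) {Y : Set α} (hY : ∃ t ≤ P.length, P.vert t ∈ Y) :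
    ∃ Q : ArcWalk E, Q.start ∈ Y ∧ Q.finish = P.finish ∧ Q.AvoidsAfterStart Y ∧
      Q.support ⊆ P.support := by
  classical
  obtain ⟨t, ht, htY⟩ := hY
  obtain ⟨i, hi⟩ : ∃ i, Nat.findGreatest (P.vert · ∈ Y) P.length = i := ⟨_, rfl⟩
  have hle : i ≤ P.length := hi ▸ Nat.findGreatest_le _
  have hiY : P.vert i ∈ Y := hi ▸ Nat.findGreatest_spec (P := (P.vert · ∈ Y)) ht htY
  have hmax : ∀ s, i < s → s ≤ P.length → P.vert s ∉ Y := fun s h₁ h₂ ↦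
    Nat.findGreatest_is_greatest (P := (P.vert · ∈ Y)) (hi ▸ h₁) h₂
  exact ⟨P.drop i, hiY, P.finish_drop hle,
    fun s (hs : s ≤ P.length - i) hs0 ↦ hmax (i + s) (by omega) (by omega),
    P.support_drop_subset hle⟩

end ArcWalk

open ArcWalk

section Menger

variable {E F : Finset (α × α)} {A B S T : Finset α} {x y : α} {k : ℕ}

def Separates (E : Finset (α × α)) (A B S : Finset α) : Prop :=
  ∀ P : ArcWalk E, P.start ∈ A → P.finish ∈ B → ∃ v ∈ P.support, v ∈ S

lemma Separates.finish_mem_of_mem_support (hS : Separates E A B S) {P Q : ArcWalk E}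
    (hPA : P.start ∈ A) (hQB : Q.finish ∈ B) (hP : P.AvoidsBeforeFinish S)
    (hQ : Q.AvoidsAfterStart S) {v : α} (hvP : v ∈ P.support) (hvQ : v ∈ Q.support) :
    P.finish ∈ S ∧ Q.start = P.finish := by
  obtain ⟨a, ha, rfl⟩ := mem_support.1 hvP
  obtain ⟨b, hb, hab⟩ := mem_support.1 hvQ
  have hjoin : (P.take a ha).finish = (Q.drop b).start := by rw [finish_take, start_drop, hab]
  obtain ⟨w, hw, hwS⟩ := hS ((P.take a ha).append (Q.drop b) hjoin) (by simpa using hPA)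
    (by simpa [Q.finish_drop hb] using hQB)
  have haS : P.vert a ∈ S := by
    rcases (support_append _ _ _ ▸ hw : w ∈ _ ∪ _) with hw | hw
    · obtain ⟨t, ht, rfl⟩ := mem_support.1 hw
      have : ¬ t < P.length := fun h ↦ hP t h hwS
      rwa [show a = t by simp [take] at ht; omega]
    · obtain ⟨t, ht, rfl⟩ := mem_support.1 hw
      have : ¬ 0 < b + t := fun h ↦ hQ (b + t) (by simp [drop] at ht; omega) h hwS
      rwa [← hab, show b = b + t by omega]
  obtain rfl : a = P.length := by by_contra h; exact hP a (by omega) haS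
  obtain rfl : b = 0 := by by_contra h; exact hQ b hb (by omega) (hab ▸ haS)
  exact ⟨haS, hab⟩

structure Linkage (E : Finset (α × α)) (A B : Finset α) (k : ℕ) where
  walk : Fin k → ArcWalk E
  start_mem : ∀ i, (walk i).start ∈ A
  finish_mem : ∀ i, (walk i).finish ∈ B
  disjoint : Pairwise (Disjoint on fun i ↦ (walk i).support)

namespace Linkage

def ofSubset (h : E ⊆ F) (L : Linkage E A B k) : Linkage F A B k :=
  ⟨fun i ↦ (L.walk i).ofSubset h, L.start_mem, L.finish_mem, L.disjoint⟩

lemma eq_of_mem_support (L : Linkage E A B k) {i j : Fin k} {v : α}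
    (hi : v ∈ (L.walk i).support) (hj : v ∈ (L.walk j).support) : i = j :=
  by_contra fun hij ↦ Set.disjoint_left.1 (L.disjoint hij) hi hj

lemma start_injective (L : Linkage E A B k) : Injective fun i ↦ (L.walk i).start :=
  fun i j (h : (L.walk i).start = (L.walk j).start) ↦
    L.eq_of_mem_support (L.walk i).start_mem_support (h ▸ (L.walk j).start_mem_support)

lemma finish_injective (L : Linkage E A B k) : Injective fun i ↦ (L.walk i).finish :=
  fun i j (h : (L.walk i).finish = (L.walk j).finish) ↦
    L.eq_of_mem_support (L.walk i).finish_mem_support (h ▸ (L.walk j).finish_mem_support)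

lemma exists_start_eq (L : Linkage E A B k) (hA : A.card = k) {a : α} (ha : a ∈ A) :
    ∃ i, (L.walk i).start = a := by
  have hbij : Bijective fun i ↦ (⟨(L.walk i).start, L.start_mem i⟩ : A) := by
    rw [Fintype.bijective_iff_injective_and_card]
    exact ⟨fun i j h ↦ L.start_injective (congrArg Subtype.val h), by simp [hA]⟩
  obtain ⟨i, hi⟩ := hbij.2 ⟨a, ha⟩
  exact ⟨i, congrArg Subtype.val hi⟩

lemma nonempty_of_le_card_inter [DecidableEq α] (h : k ≤ (A ∩ B).card) :
    Nonempty (Linkage E A B k) := by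
  obtain ⟨g⟩ : Nonempty (Fin k ↪ (A ∩ B : Finset α)) :=
    Function.Embedding.nonempty_of_card_le (by simpa using h)
  refine ⟨⟨fun i ↦ nil (g i), fun i ↦ (mem_inter.1 (g i).2).1,
    fun i ↦ (mem_inter.1 (g i).2).2, fun i j hij ↦ ?_⟩⟩
  simpa [onFun] using fun h ↦ hij (g.injective (Subtype.ext h))

lemma exists_avoidsBeforeFinish (L : Linkage E A B k) :
    ∃ L' : Linkage E A B k, ∀ i, (L'.walk i).AvoidsBeforeFinish B := by
  choose P hPA hPB hP hPsupp using fun i ↦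
    (L.walk i).exists_take_first (X := B) ⟨_, le_rfl, L.finish_mem i⟩
  exact ⟨⟨P, fun i ↦ hPA i ▸ L.start_mem i, hPB, fun i j hij ↦
    (L.disjoint hij).mono (hPsupp i) (hPsupp j)⟩, hP⟩

lemma exists_avoidsAfterStart (L : Linkage E A B k) :
    ∃ L' : Linkage E A B k, ∀ i, (L'.walk i).AvoidsAfterStart A := by
  choose P hPA hPB hP hPsupp using fun i ↦
    (L.walk i).exists_drop_last (Y := A) ⟨0, Nat.zero_le _, L.start_mem i⟩
  exact ⟨⟨P, hPA, fun i ↦ hPB i ▸ L.finish_mem i, fun i j hij ↦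
    (L.disjoint hij).mono (hPsupp i) (hPsupp j)⟩, hP⟩

end Linkage

variable [DecidableEq α]

lemma separates_empty_inter (A B : Finset α) : Separates ∅ A B (A ∩ B) := by
  intro P hA hB
  have hP : P.length = 0 := by
    by_contra h
    simpa using P.mem_arcs 0 (Nat.pos_of_ne_zero h)
  refine ⟨P.start, P.start_mem_support, mem_inter.2 ⟨hA, ?_⟩⟩
  rwa [start, ← hP]

lemma Separates.mem_or_exists_arc_eq {e : α × α} (hS : Separates (E.erase e) A B S)
    {P : ArcWalk E} (hA : P.start ∈ A) (hB : P.finish ∈ B) :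
    (∃ v ∈ P.support, v ∈ S) ∨ ∃ t < P.length, (P.vert t, P.vert (t + 1)) = e := by
  by_contra! h
  obtain ⟨v, hv, hvS⟩ := hS (P.ofErase h.2) hA hB
  exact h.1 v hv hvS

lemma Separates.insert_fst (hS : Separates (E.erase (x, y)) A B S) :
    Separates E A B (insert x S) := by
  intro P hA hB
  rcases hS.mem_or_exists_arc_eq hA hB with ⟨v, hv, hvS⟩ | ⟨t, ht, he⟩
  · exact ⟨v, hv, mem_insert_of_mem hvS⟩
  · exact ⟨_, P.vert_mem_support ht.le, by simp [(Prod.mk.inj he).1]⟩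

lemma Separates.insert_snd (hS : Separates (E.erase (x, y)) A B S) :
    Separates E A B (insert y S) := by
  intro P hA hB
  rcases hS.mem_or_exists_arc_eq hA hB with ⟨v, hv, hvS⟩ | ⟨t, ht, he⟩
  · exact ⟨v, hv, mem_insert_of_mem hvS⟩
  · exact ⟨_, P.vert_mem_support ht, by simp [(Prod.mk.inj he).2]⟩

lemma Separates.of_separates_erase_left {X : Finset α} (hX : Separates E A B X) (hx : x ∈ X)
    (hT : Separates (E.erase (x, y)) A X T) : Separates E A B T := by
  intro P hA hB
  obtain ⟨v, hv, hvX⟩ := hX P hA hB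
  obtain ⟨t, ht, rfl⟩ := mem_support.1 hv
  obtain ⟨Q, hQA, hQX, hQ, hQP⟩ := P.exists_take_first (X := X) ⟨t, ht, hvX⟩
  have hQe : ∀ s < Q.length, (Q.vert s, Q.vert (s + 1)) ≠ (x, y) := fun s hs he ↦
    hQ s hs (by rwa [(Prod.mk.inj he).1])
  obtain ⟨w, hw, hwT⟩ := hT (Q.ofErase hQe) (hQA ▸ hA) hQX
  exact ⟨w, hQP hw, hwT⟩

lemma Separates.of_separates_erase_right {Y : Finset α} (hY : Separates E A B Y) (hy : y ∈ Y)
    (hT : Separates (E.erase (x, y)) Y B T) : Separates E A B T := by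
  intro P hA hB
  obtain ⟨v, hv, hvY⟩ := hY P hA hB
  obtain ⟨t, ht, rfl⟩ := mem_support.1 hv
  obtain ⟨Q, hQY, hQB, hQ, hQP⟩ := P.exists_drop_last (Y := Y) ⟨t, ht, hvY⟩
  have hQe : ∀ s < Q.length, (Q.vert s, Q.vert (s + 1)) ≠ (x, y) := fun s hs he ↦
    hQ (s + 1) hs (Nat.succ_pos s) (by rwa [(Prod.mk.inj he).2])
  obtain ⟨w, hw, hwT⟩ := hT (Q.ofErase hQe) hQY (hQB ▸ hB)
  exact ⟨w, hQP hw, hwT⟩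

lemma Linkage.nonempty_of_halves {E' : Finset (α × α)} (hE' : E' ⊆ E) (hxy : (x, y) ∈ E)
    (hS : Separates E' A B S) (hyS : y ∉ S)
    (P : Linkage E' A (insert x S) k) (hP : ∀ i, (P.walk i).AvoidsBeforeFinish S)
    (Q : Linkage E' (insert y S) B k) (hQ : ∀ j, (Q.walk j).AvoidsAfterStart S)
    (hQk : (insert y S).card = k) : Nonempty (Linkage E A B k) := by
  have hμ : ∀ i, ∃ j, ((P.walk i).finish = x ∧ (Q.walk j).start = y) ∨
      ((P.walk i).finish ∈ S ∧ (Q.walk j).start = (P.walk i).finish) := by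
    intro i
    rcases mem_insert.1 (P.finish_mem i) with h | h
    · obtain ⟨j, hj⟩ := Q.exists_start_eq hQk (mem_insert_self y S)
      exact ⟨j, .inl ⟨h, hj⟩⟩
    · obtain ⟨j, hj⟩ := Q.exists_start_eq hQk (mem_insert_of_mem h)
      exact ⟨j, .inr ⟨h, hj⟩⟩
  choose μ hμ using hμ
  have hμinj : Injective μ := by
    intro i j h
    apply P.finish_injective
    rcases hμ i with ⟨hi, hsi⟩ | ⟨hi, hsi⟩ <;>
      rcases hμ j with ⟨hj, hsj⟩ | ⟨hj, hsj⟩ <;> rw [h] at hsi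
    · exact hi.trans hj.symm
    · exact absurd (hsi ▸ hsj ▸ hj) hyS
    · exact absurd (hsj ▸ hsi ▸ hi) hyS
    · exact hsi.symm.trans hsj
  have hcross : ∀ i j, i ≠ j → Disjoint (P.walk i).support (Q.walk (μ j)).support := by
    intro i j hij
    refine Set.disjoint_left.2 fun v hvP hvQ ↦ ?_
    obtain ⟨hiS, hstart⟩ := hS.finish_mem_of_mem_support (P.start_mem i) (Q.finish_mem _)
      (hP i) (hQ _) hvP hvQ
    rcases hμ j with ⟨_, hj⟩ | ⟨_, hj⟩
    · exact hyS (hj ▸ hstart ▸ hiS)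
    · exact hij (P.finish_injective (hstart.symm.trans hj))
  choose R hRA hRB hR using fun i ↦
    ((P.walk i).ofSubset hE').exists_join ((Q.walk (μ i)).ofSubset hE') (by
      rcases hμ i with ⟨hi, hj⟩ | ⟨-, hj⟩
      · exact .inr (by simpa [hi, hj] using hxy)
      · exact .inl (by simp [hj]))
  refine ⟨⟨R, fun i ↦ hRA i ▸ P.start_mem i, fun i ↦ hRB i ▸ Q.finish_mem _,
    fun i j hij ↦ Disjoint.mono (hR i) (hR j) ?_⟩⟩
  simp only [support_ofSubset, Set.disjoint_union_left, Set.disjoint_union_right]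
  exact ⟨⟨P.disjoint hij, (hcross j i hij.symm).symm⟩, hcross i j hij,
    Q.disjoint (hμinj.ne hij)⟩

/-- If deleting an arc `xy` leaves a separator `S` with `|S| < k`, then `S ∪ {x}` and `S ∪ {y}`
are minimum separators, and linkages of `E - xy` from `A` to `S ∪ {x}` and from `S ∪ {y}` to `B`
glue along `S` and `xy`. -/
theorem Linkage.nonempty_of_forall_separates_le_card (E : Finset (α × α)) (A B : Finset α)
    (k : ℕ) (h : ∀ S, Separates E A B S → k ≤ S.card) : Nonempty (Linkage E A B k) := by
  induction E using Finset.strongInduction generalizing A B with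
  | H E ih =>
  rcases E.eq_empty_or_nonempty with rfl | ⟨⟨x, y⟩, he⟩
  · exact nonempty_of_le_card_inter (h _ (separates_empty_inter A B))
  have ih' := ih _ (erase_ssubset he)
  by_cases hmin : ∀ S, Separates (E.erase (x, y)) A B S → k ≤ S.card
  · exact (ih' A B hmin).map (ofSubset (erase_subset _ _))
  push Not at hmin
  obtain ⟨S, hS, hSk⟩ := hmin
  have hYk : (insert y S).card = k := le_antisymm
    ((card_insert_le y S).trans (by omega)) (h _ hS.insert_snd)
  have hyS : y ∉ S := fun hy ↦ by rw [insert_eq_of_mem hy] at hYk; omega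
  obtain ⟨P⟩ := ih' A (insert x S) fun T hT ↦
    h T (hS.insert_fst.of_separates_erase_left (mem_insert_self x S) hT)
  obtain ⟨Q⟩ := ih' (insert y S) B fun T hT ↦
    h T (hS.insert_snd.of_separates_erase_right (mem_insert_self y S) hT)
  obtain ⟨P', hP'⟩ := P.exists_avoidsBeforeFinish
  obtain ⟨Q', hQ'⟩ := Q.exists_avoidsAfterStart
  exact nonempty_of_halves (erase_subset _ _) he hS hyS
    P' (fun i t ht htS ↦ hP' i t ht (mem_insert_of_mem htS))
    Q' (fun j t ht ht0 htS ↦ hQ' j t ht ht0 (mem_insert_of_mem htS)) hYk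

end Menger

lemma card_range_le_of_factorsThrough {β γ δ : Type*} [Finite γ] {g : β → δ}
    {φ : β → γ} (h : FactorsThrough g φ) : Nat.card (Set.range g) ≤ Nat.card γ := by
  rcases isEmpty_or_nonempty β with hβ | ⟨⟨b⟩⟩
  · simp [Set.range_eq_empty]
  have : Nonempty δ := ⟨g b⟩
  obtain ⟨e, rfl⟩ := (factorsThrough_iff g).1 h
  exact (Nat.card_mono (Set.finite_range e) (Set.range_comp_subset_range φ e)).trans
    (Finite.card_range_le e)

section TimeExpansion

variable {n q p : ℕ} {D : Fin n → Fin n → Prop}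

open scoped Classical in
noncomputable def timeExpansion (D : Fin n → Fin n → Prop) (p : ℕ) :
    Finset ((ℕ × Fin n) × (ℕ × Fin n)) :=
  {e ∈ (range p ×ˢ univ) ×ˢ (range (p + 1) ×ˢ univ) | e.2.1 = e.1.1 + 1 ∧ D e.1.2 e.2.2}

lemma mem_timeExpansion {a b : ℕ × Fin n} :
    (a, b) ∈ timeExpansion D p ↔ a.1 < p ∧ b.1 = a.1 + 1 ∧ D a.2 b.2 := by
  simp only [timeExpansion, mem_filter, mem_product, mem_range, mem_univ, and_true]
  constructor
  · rintro ⟨⟨ha, -⟩, hb, hD⟩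
    exact ⟨ha, hb, hD⟩
  · rintro ⟨ha, hb, hD⟩
    exact ⟨⟨ha, by omega⟩, hb, hD⟩

def layer (t : ℕ) : Finset (ℕ × Fin n) := {t} ×ˢ univ

@[simp] lemma mem_layer {t : ℕ} {a : ℕ × Fin n} : a ∈ layer t ↔ a.1 = t := by
  simp only [layer, mem_product, mem_singleton, mem_univ, and_true]

lemma ArcWalk.fst_vert_of_timeExpansion {P : ArcWalk (timeExpansion D p)} (hP : P.start.1 = 0)
    {t : ℕ} (ht : t ≤ P.length) : (P.vert t).1 = t := by
  induction t with
  | zero => exact hP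
  | succ t ih => rw [(mem_timeExpansion.1 (P.mem_arcs t ht)).2.1, ih (by omega)]

lemma le_alphaWalks {k : ℕ} (W : Fin k → Fin (p + 1) → Fin n) (hW : ∀ i, IsPWalk D p (W i))
    (hind : ∀ i j, i ≠ j → ∀ s, W i s ≠ W j s) : k ≤ alphaWalks D p := by
  refine le_csSup ⟨n, ?_⟩ ⟨W, hW, hind⟩
  rintro k' ⟨W', -, hind'⟩
  simpa using Fintype.card_le_of_injective (fun i ↦ W' i 0) fun i j h ↦
    by_contra fun hij ↦ hind' i j hij 0 h

lemma Linkage.le_alphaWalks {k : ℕ} (L : Linkage (timeExpansion D p) (layer 0) (layer p) k) :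
    k ≤ alphaWalks D p := by
  have hfst : ∀ i, ∀ t ≤ (L.walk i).length, ((L.walk i).vert t).1 = t := fun i _ ↦
    ArcWalk.fst_vert_of_timeExpansion (mem_layer.1 (L.start_mem i))
  have hlen : ∀ i, (L.walk i).length = p := fun i ↦
    (hfst i _ le_rfl).symm.trans (mem_layer.1 (L.finish_mem i))
  refine _root_.le_alphaWalks (fun i s ↦ ((L.walk i).vert s).2) (fun i s ↦ ?_)
    fun i j hij s h ↦ hij ?_
  · simpa using (mem_timeExpansion.1 ((L.walk i).mem_arcs s (by rw [hlen]; exact s.2))).2.2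
  · have hsi : (s : ℕ) ≤ (L.walk i).length := (hlen i).symm ▸ Nat.lt_succ_iff.1 s.2
    have hsj : (s : ℕ) ≤ (L.walk j).length := (hlen j).symm ▸ Nat.lt_succ_iff.1 s.2
    have hij : (L.walk i).vert s = (L.walk j).vert s :=
      Prod.ext (by rw [hfst i s hsi, hfst j s hsj]) h
    exact L.eq_of_mem_support ((L.walk i).vert_mem_support hsi)
      (hij ▸ (L.walk j).vert_mem_support hsj)

lemma exists_separates_card_le_alphaWalks (D : Fin n → Fin n → Prop) (p : ℕ) :
    ∃ S, Separates (timeExpansion D p) (layer 0) (layer p) S ∧ S.card ≤ alphaWalks D p := by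
  by_contra! h
  obtain ⟨L⟩ := Linkage.nonempty_of_forall_separates_le_card _ _ _ (alphaWalks D p + 1) h
  exact Nat.lt_irrefl _ L.le_alphaWalks

lemma SubIG.dependsOn {f : (Fin n → Fin q) → Fin n → Fin q} (hf : SubIG D f) (v : Fin n) :
    DependsOn (f · v) {u | D u v} := by
  classical
  suffices ∀ s : Finset (Fin n), ∀ x y : Fin n → Fin q, (∀ u ∉ s, x u = y u) →
      (∀ u ∈ s, ¬ D u v) → f x v = f y v from
    fun x y hxy ↦ this {u | ¬ D u v} x y (fun u hu ↦ hxy u (by simpa using hu)) (by simp)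
  intro s
  induction s using Finset.induction_on with
  | empty => exact fun x y hxy _ ↦ congrArg (f · v) (funext fun u ↦ hxy u (notMem_empty u))
  | insert a s ha ih =>
    intro x y hxy hs
    have hupd : f (update y a (x a)) v = f y v := by
      by_contra hne
      exact hs a (mem_insert_self a s) (hf a v ⟨_, _, fun w hw ↦ update_of_ne hw _ _, hne⟩)
    rw [← hupd]
    refine ih x _ (fun u hu ↦ ?_) fun u hu ↦ hs u (mem_insert_of_mem hu)
    by_cases hua : u = a
    · simp [hua]
    · simpa [hua] using hxy u (by simp [hua, hu])

lemma iterate_apply_eq_of_separates {f : (Fin n → Fin q) → Fin n → Fin q} (hf : SubIG D f)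
    {S : Finset (ℕ × Fin n)} {x y : Fin n → Fin q}
    (hxy : ∀ a ∈ S, f^[a.1] x a.2 = f^[a.1] y a.2) {s : ℕ} (hs : s ≤ p) {v : Fin n}
    (hS : Separates (timeExpansion D p) (layer 0) {(s, v)} S) :
    f^[s] x v = f^[s] y v := by
  induction s generalizing v with
  | zero =>
    obtain ⟨a, ha, haS⟩ := hS (ArcWalk.nil (0, v)) (by simp) (by simp)
    rw [ArcWalk.support_nil, Set.mem_singleton_iff] at ha
    subst ha
    exact hxy _ haS
  | succ s ih =>
    by_cases hvS : (s + 1, v) ∈ S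
    · exact hxy _ hvS
    rw [iterate_succ_apply', iterate_succ_apply']
    refine hf.dependsOn v fun u (hu : D u v) ↦ ih (by omega) fun P hP hPu ↦ ?_
    rw [mem_singleton] at hPu
    obtain ⟨R, hRA, hRB, hR⟩ := P.exists_join (ArcWalk.nil (s + 1, v))
      (.inr (mem_timeExpansion.2 (by simp [hPu, hu]; omega)))
    obtain ⟨a, ha, haS⟩ := hS R (hRA ▸ hP) (by simp [hRB])
    rcases hR ha with ha | ha
    · exact ⟨a, ha, haS⟩
    · rw [ArcWalk.support_nil, Set.mem_singleton_iff] at ha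
      exact absurd (ha ▸ haS) hvS

lemma card_range_iterate_le_of_separates {f : (Fin n → Fin q) → Fin n → Fin q}
    (hf : SubIG D f) {S : Finset (ℕ × Fin n)}
    (hS : Separates (timeExpansion D p) (layer 0) (layer p) S) :
    Nat.card (Set.range f^[p]) ≤ q ^ S.card := by
  have h : FactorsThrough f^[p] fun x (a : S) ↦ f^[a.1.1] x a.1.2 := fun x y hxy ↦
    funext fun v ↦ iterate_apply_eq_of_separates hf (fun a ha ↦ congrFun hxy ⟨a, ha⟩) le_rfl
      fun P hP hPv ↦ hS P hP (by simp [(mem_singleton.1 hPv)])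
  simpa [Nat.card_fun] using card_range_le_of_factorsThrough h

end TimeExpansion

theorem rank_iterate_upper_bound_general {n p q : ℕ} (hq : 2 ≤ q)
    (D : Fin n → Fin n → Prop)
    (f : (Fin n → Fin q) → Fin n → Fin q) (hf : SubIG D f) :
    Nat.card (Set.range (f^[p])) ≤ q ^ alphaWalks D p := by
  obtain ⟨S, hS, hSα⟩ := exists_separates_card_le_alphaWalks D p
  calc Nat.card (Set.range (f^[p])) ≤ q ^ S.card := card_range_iterate_le_of_separates hf hS
    _ ≤ q ^ alphaWalks D p := Nat.pow_le_pow_right (by omega) hSα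

/-- for `q ≥ 2`, `p ≥ 1` and `f ∈ F(D,q)`, `|Im(f^p)| ≤ q ^ α_p(D)`. -/
theorem rank_iterate_upper_bound {n p q : ℕ} (hn : 1 ≤ n) (hp : 1 ≤ p) (hq : 2 ≤ q)
    (D : Fin n → Fin n → Prop)
    (f : (Fin n → Fin q) → Fin n → Fin q) (hf : SubIG D f) :
    Nat.card (Set.range (f^[p])) ≤ q ^ alphaWalks D p :=
  rank_iterate_upper_bound_general hq D f hf
end

section
/- Let D be a digraph on vertex set V = {1,…,n} and let q ≥ 3. The following are equivalent: (1) F[D,q] contains a permutation of [q]^n; (2) there exist f ∈ F[D,q] and a block-sequential schedule σ such that f^σ is a permutation of [q]^n; (3) all the vertices of D can be covered by pairwise vertex-disjoint cycles of D. -/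
open Function

/-
Each vertex of `D` must receive a distinct in-neighbour, i.e. `D` contains the arcs `(e v, v)` of a
permutation `e`; the cycles of `e` are then vertex-disjoint cycles of `D` covering every vertex, and
conversely such a cover defines `e`.

If `f^σ` is bijective for a block-sequential `σ`, so is every block update `f^(S)`. Restricted to
`T ∪ Sᶜ` with `T ⊆ S`, `f^(S)` only reads the coordinates in `N ∪ Sᶜ`, where `N` is the set of
in-neighbours of `T` inside `S`; hence `q ^ #T ≤ q ^ #N`. This is Hall's condition for matching the
vertices of `S` to distinct in-neighbours in `S`, and since the blocks partition the vertices, these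
matchings combine into `e`.

Conversely, given `e` and `q ≥ 3`, let `f_v(x) = x_{e v}`, with the values `1` and `2` swapped when
an odd number of the other in-neighbours `u` of `v` have `x_u = 0`. Every arc of `D` is essential,
and `f` is injective: the zeros of `f x` are those of `x` moved along `e`, so the parities, and then
`x` itself, can be read off `f x`.
-/

open Finset

theorem Finite.bijective_of_bijective_comp {α : Type*} [Finite α] {g h : α → α}
    (hgh : Bijective (g ∘ h)) : Bijective g ∧ Bijective h :=
  ⟨Finite.surjective_iff_bijective.1 hgh.2.of_comp, Finite.injective_iff_bijective.1 hgh.1.of_comp⟩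

theorem Function.DependsOn.card_le_of_surjective {ι α β : Type*} [Fintype α] [Fintype β]
    {g : (ι → α) → β} {s : Finset ι} (hg : DependsOn g s) (hsurj : Surjective g) :
    Fintype.card β ≤ Fintype.card α ^ #s := by
  classical
  cases isEmpty_or_nonempty β
  · simp
  obtain ⟨g', rfl⟩ := dependsOn_iff_exists_comp.1 hg
  simpa using Fintype.card_le_of_surjective g' hsurj.of_comp

theorem List.foldl_comp_eq_comp_foldl {α β : Type*} (h : β → α → α) (g : α → α) (l : List β) :
    l.foldl (fun g b => h b ∘ g) g = l.foldl (fun g b => h b ∘ g) id ∘ g := by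
  induction l generalizing g with
  | nil => rfl
  | cons b l ih => rw [List.foldl_cons, List.foldl_cons, ih, ih (h b ∘ id)]; rfl

section FDS

variable {n q : ℕ} {D : Fin n → Fin n → Prop} {f : (Fin n → Fin q) → Fin n → Fin q}

theorem dependsOn_apply_of_IG (f : (Fin n → Fin q) → Fin n → Fin q) (v : Fin n) :
    DependsOn (fun x => f x v) {u | IG f u v} := by
  intro x y hxy
  suffices key : ∀ (s : Finset (Fin n)) (x : Fin n → Fin q), (∀ u ∉ s, x u = y u) →
      (∀ u, IG f u v → x u = y u) → f x v = f y v from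
    key univ x (by simp) hxy
  intro s
  induction s using Finset.induction_on with
  | empty => intro x hx _; rw [funext fun u => hx u (notMem_empty u)]
  | insert a s _ ih =>
    intro x hx hxy
    set x' := update x a (y a)
    have hxx' : f x v = f x' v := by
      by_contra hne
      have hIG : IG f a v := ⟨x, x', fun w hw => (update_of_ne hw _ _).symm, hne⟩
      exact hne (by simp [x', ← hxy a hIG])
    rw [hxx']
    refine ih x' (fun u hu => ?_) fun u hu => ?_
    · rcases eq_or_ne u a with rfl | hua
      · simp [x']
      · simp [x', hua, hx u (by simp [hua, hu])]
    · rcases eq_or_ne u a with rfl | hua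
      · simp [x']
      · simp [x', hua, hxy u hu]

theorem applySchedule_cons (f : (Fin n → Fin q) → Fin n → Fin q) (S : Finset (Fin n))
    (σ : List (Finset (Fin n))) :
    applySchedule f (S :: σ) = applySchedule f σ ∘ applyBlock f S :=
  List.foldl_comp_eq_comp_foldl (applyBlock f) (applyBlock f S ∘ id) σ

theorem applySchedule_singleton_univ (f : (Fin n → Fin q) → Fin n → Fin q) :
    applySchedule f [univ] = f := by
  funext x v
  simp [applySchedule, applyBlock]

theorem blockSequential_singleton_univ : BlockSequential [(univ : Finset (Fin n))] :=
  ⟨List.pairwise_singleton _ _, fun v => ⟨univ, List.mem_singleton_self _, mem_univ v⟩⟩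

theorem bijective_applyBlock_of_bijective_applySchedule {σ : List (Finset (Fin n))}
    (h : Bijective (applySchedule f σ)) {S : Finset (Fin n)} (hS : S ∈ σ) :
    Bijective (applyBlock f S) := by
  induction σ with
  | nil => simp at hS
  | cons T τ ih =>
    rw [applySchedule_cons] at h
    obtain ⟨hτ, hT⟩ := Finite.bijective_of_bijective_comp h
    rcases List.mem_cons.1 hS with rfl | hS
    exacts [hT, ih hτ hS]

open Classical in
theorem card_le_card_inNeighbors_of_bijective_applyBlock (hq : 1 < q) (hf : SubIG D f)
    {S T : Finset (Fin n)} (hS : Bijective (applyBlock f S)) (hT : T ⊆ S) :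
    #T ≤ #{u ∈ S | ∃ v ∈ T, D u v} := by
  set N := {u ∈ S | ∃ v ∈ T, D u v}
  let g : (Fin n → Fin q) → ↥(T ∪ Sᶜ) → Fin q := fun x v => applyBlock f S x v
  have hsurj : Surjective g := by
    intro t
    obtain ⟨x, hx⟩ := hS.2 fun v => if h : v ∈ T ∪ Sᶜ then t ⟨v, h⟩ else (⟨0, by omega⟩ : Fin q)
    exact ⟨x, funext fun v => by simp [g, hx]⟩
  have hdep : DependsOn g ↑(N ∪ Sᶜ) := by
    intro x y hxy
    refine funext fun ⟨v, hv⟩ => ?_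
    simp only [g, applyBlock]
    split_ifs with hvS
    · have hvT : v ∈ T := by simpa [hvS] using hv
      refine dependsOn_apply_of_IG f v fun u hu => hxy u ?_
      by_cases huS : u ∈ S
      · exact mem_union_left _ (mem_filter.2 ⟨huS, v, hvT, hf u v hu⟩)
      · simp [huS]
    · exact hxy v (by simp [hvS])
  have hcard := hdep.card_le_of_surjective hsurj
  have hTS : Disjoint T Sᶜ := disjoint_compl_right.mono_left hT
  have hNS : Disjoint N Sᶜ := disjoint_compl_right.mono_left (filter_subset _ _)
  rw [Fintype.card_fun, Fintype.card_coe, Fintype.card_fin, card_union_of_disjoint hTS,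
    card_union_of_disjoint hNS, Nat.pow_le_pow_iff_right hq] at hcard
  omega

open Classical in
theorem exists_injOn_inNeighbor_of_bijective_applyBlock (hq : 1 < q) (hf : SubIG D f)
    {S : Finset (Fin n)} (hS : Bijective (applyBlock f S)) :
    ∃ m : Fin n → Fin n, Set.InjOn m S ∧ ∀ v ∈ S, m v ∈ S ∧ D (m v) v := by
  have hall : ∀ s : Finset S, #s ≤ #(s.biUnion fun v => {u ∈ S | D u v}) := by
    intro s
    have h := card_le_card_inNeighbors_of_bijective_applyBlock hq hf hS
      (T := s.map (Embedding.subtype _)) fun u hu => by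
        obtain ⟨v, -, rfl⟩ := mem_map.1 hu
        exact v.2
    convert h using 2
    · simp
    · ext u
      simp only [mem_biUnion, mem_filter, mem_map, Embedding.subtype_apply]
      aesop
  obtain ⟨m, hm, hmem⟩ := (all_card_le_biUnion_card_iff_exists_injective _).1 hall
  refine ⟨fun v => if h : v ∈ S then m ⟨v, h⟩ else v, fun v hv w hw hvw => ?_, fun v hv => ?_⟩
  · simp only [mem_coe] at hv hw
    exact congrArg Subtype.val (hm (by simpa [hv, hw] using hvw))
  · simpa [hv] using hmem ⟨v, hv⟩

theorem exists_perm_of_blockSequential {σ : List (Finset (Fin n))} (hσ : BlockSequential σ)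
    (h : ∀ S ∈ σ, ∃ m : Fin n → Fin n, Set.InjOn m S ∧ ∀ v ∈ S, m v ∈ S ∧ D (m v) v) :
    ∃ e : Equiv.Perm (Fin n), ∀ v, D (e v) v := by
  have : Nonempty (Fin n → Fin n) := ⟨id⟩
  choose! M hM using h
  choose blk hblk hvblk using hσ.2
  have hMD : ∀ v, M (blk v) v ∈ blk v ∧ D (M (blk v) v) v := fun v =>
    (hM _ (hblk v)).2 v (hvblk v)
  have hinj : Injective fun v => M (blk v) v := by
    intro v w (hvw : M (blk v) v = M (blk w) w)
    have hblk_eq : blk v = blk w := by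
      by_contra hne
      refine Finset.disjoint_left.1 (hσ.1.forall (hblk v) (hblk w) hne) (hMD v).1 ?_
      exact hvw ▸ (hMD w).1
    simp only [hblk_eq] at hvw
    exact (hM _ (hblk w)).1 (by simpa [hblk_eq] using hvblk v) (hvblk w) hvw
  exact ⟨Equiv.ofBijective _ (Finite.injective_iff_bijective.1 hinj), fun v => (hMD v).2⟩

theorem exists_perm_of_bijective_applySchedule (hq : 1 < q) (hf : SubIG D f)
    {σ : List (Finset (Fin n))} (hσ : BlockSequential σ) (h : Bijective (applySchedule f σ)) :
    ∃ e : Equiv.Perm (Fin n), ∀ v, D (e v) v :=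
  exists_perm_of_blockSequential hσ fun _ hS => exists_injOn_inNeighbor_of_bijective_applyBlock hq
    hf (bijective_applyBlock_of_bijective_applySchedule h hS)

end FDS

section Cycles

variable {n : ℕ} {D : Fin n → Fin n → Prop}

theorem IsCycleList.rel_next {c : List (Fin n)} (hc : IsCycleList D c) {v : Fin n} (hv : v ∈ c) :
    D v (c.next v hv) := by
  obtain ⟨i, hi, rfl⟩ := List.getElem_of_mem hv
  rw [List.next_getElem _ hc.2.1]
  exact hc.2.2 ⟨i, hi⟩

theorem isCycleList_of_chain {c : List (Fin n)} (hne : c ≠ []) (hnd : c.Nodup)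
    (hch : Cycle.Chain D (c : Cycle (Fin n))) : IsCycleList D c := by
  refine ⟨hne, hnd, fun ⟨i, hi⟩ => ?_⟩
  obtain ⟨a, t, rfl⟩ := List.exists_cons_of_ne_nil hne
  rw [Cycle.chain_coe_cons, ← List.cons_append, List.isChain_iff_getElem] at hch
  have h1 := hch i (by simp at hi ⊢; omega)
  simp only [List.get_eq_getElem]
  rw [List.getElem_append_left hi] at h1
  rcases Nat.lt_or_ge (i + 1) (a :: t).length with h | h
  · simp only [Nat.mod_eq_of_lt h]
    rwa [List.getElem_append_left h] at h1
  · obtain rfl : i = t.length := by simp at hi h; omega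
    simpa using h1

theorem exists_perm_of_coveredByDisjointCycles (h : CoveredByDisjointCycles D) :
    ∃ p : Equiv.Perm (Fin n), ∀ v, D v (p v) := by
  obtain ⟨Cs, hcyc, hdisj, hcover⟩ := h
  choose c hc hvc using hcover
  have hsame : ∀ v w, (∃ u, u ∈ c v ∧ u ∈ c w) → c v = c w := by
    rintro v w ⟨u, hv, hw⟩
    by_contra hne
    have : Std.Symm fun a b : List (Fin n) => ∀ v ∈ a, v ∉ b := ⟨fun a b h v hb ha => h v ha hb⟩
    exact hdisj.forall (hc v) (hc w) hne u hv hw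
  let next v := (c v).next v (hvc v)
  have hinj : Injective next := by
    intro v w hvw
    have hcvw : c v = c w := hsame v w ⟨next v, List.next_mem _ _ _, hvw ▸ List.next_mem _ _ _⟩
    have hnd := (hcyc _ (hc w)).2.1
    rw [← (c w).prev_next hnd w (hvc w), ← (c v).prev_next (hcvw ▸ hnd) v (hvc v)]
    simp only [next] at hvw
    congr 1
  exact ⟨Equiv.ofBijective next (Finite.injective_iff_bijective.1 hinj), fun v =>
    (hcyc _ (hc v)).rel_next (hvc v)⟩

theorem Cycle.coe_out {α : Type*} (s : Cycle α) : ((Quotient.out s : List α) : Cycle α) = s :=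
  Quotient.out_eq s

theorem Cycle.mem_out_iff {α : Type*} {s : Cycle α} {a : α} :
    a ∈ (Quotient.out s : List α) ↔ a ∈ s := by
  rw [← Cycle.mem_coe_iff, Cycle.coe_out]

theorem Function.periodicOrbit_eq_of_mem {α : Type*} {f : α → α} {x y : α}
    (hx : x ∈ periodicPts f) (hy : y ∈ periodicOrbit f x) :
    periodicOrbit f y = periodicOrbit f x := by
  obtain ⟨k, rfl⟩ := (mem_periodicOrbit_iff hx).1 hy
  exact periodicOrbit_apply_iterate_eq hx k

theorem coveredByDisjointCycles_of_perm (p : Equiv.Perm (Fin n)) (hp : ∀ v, D v (p v)) :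
    CoveredByDisjointCycles D := by
  have hper : ∀ v, v ∈ periodicPts p := p.injective.mem_periodicPts
  let orbits := (univ.image (periodicOrbit p)).toList
  have horbits : ∀ o ∈ orbits, ∃ v, periodicOrbit p v = o := by simp [orbits]
  refine ⟨orbits.map Quotient.out, ?_, ?_, fun v => ?_⟩
  · intro l hl
    obtain ⟨o, ho, rfl⟩ := List.mem_map.1 hl
    obtain ⟨v, rfl⟩ := horbits o ho
    refine isCycleList_of_chain ?_ ?_ ?_
    · rw [ne_eq, ← Cycle.coe_eq_nil, Cycle.coe_out, periodicOrbit_eq_nil_iff_not_periodic_pt]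
      exact not_not.2 (hper v)
    · rw [← Cycle.nodup_coe_iff, Cycle.coe_out]
      exact nodup_periodicOrbit
    · rw [Cycle.coe_out, periodicOrbit_chain' D (hper v)]
      exact fun k => by rw [iterate_succ_apply']; exact hp _
  · refine List.pairwise_map.2 ((nodup_toList _).imp_of_mem fun ho₁ ho₂ hne w hw₁ hw₂ => hne ?_)
    obtain ⟨v₁, rfl⟩ := horbits _ ho₁
    obtain ⟨v₂, rfl⟩ := horbits _ ho₂
    rw [Cycle.mem_out_iff] at hw₁ hw₂
    rw [← periodicOrbit_eq_of_mem (hper v₁) hw₁, periodicOrbit_eq_of_mem (hper v₂) hw₂]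
  · refine ⟨_, List.mem_map_of_mem (show periodicOrbit p v ∈ orbits by simp [orbits]), ?_⟩
    exact Cycle.mem_out_iff.2 (self_mem_periodicOrbit (hper v))

theorem coveredByDisjointCycles_iff_exists_perm :
    CoveredByDisjointCycles D ↔ ∃ e : Equiv.Perm (Fin n), ∀ v, D (e v) v := by
  refine ⟨fun h => ?_, fun ⟨e, he⟩ => coveredByDisjointCycles_of_perm e.symm fun v => by
    simpa using he (e.symm v)⟩
  obtain ⟨p, hp⟩ := exists_perm_of_coveredByDisjointCycles h
  exact ⟨p.symm, fun v => by simpa using hp (p.symm v)⟩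

end Cycles

section ParityFDS

variable {n q : ℕ} {D : Fin n → Fin n → Prop} {e : Equiv.Perm (Fin n)} {z : Fin q}
  {s : Equiv.Perm (Fin q)}

open Classical in
noncomputable def parityFDS (D : Fin n → Fin n → Prop) (e : Equiv.Perm (Fin n)) (z : Fin q)
    (s : Equiv.Perm (Fin q)) (x : Fin n → Fin q) (v : Fin n) : Fin q :=
  if Odd #{u | D u v ∧ u ≠ e v ∧ x u = z} then s (x (e v)) else x (e v)

theorem parityFDS_eq_iff (hs : s z = z) (x : Fin n → Fin q) (v : Fin n) :
    parityFDS D e z s x v = z ↔ x (e v) = z := by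
  unfold parityFDS
  split_ifs
  · rw [← hs, s.apply_eq_iff_eq, hs]
  · rfl

theorem parityFDS_injective (hs : s z = z) : Injective (parityFDS D e z s) := by
  intro x y hxy
  have hzero : ∀ u, x u = z ↔ y u = z := fun u => by
    simpa [parityFDS_eq_iff hs] using congrArg (· = z) (congrFun hxy (e.symm u))
  classical
  have hcount : ∀ v, univ.filter (fun u => D u v ∧ u ≠ e v ∧ x u = z) =
      univ.filter (fun u => D u v ∧ u ≠ e v ∧ y u = z) :=
    fun v => filter_congr fun u _ => by rw [hzero]
  funext u
  have h := congrFun hxy (e.symm u)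
  simp only [parityFDS, hcount] at h
  simp only [Equiv.apply_symm_apply] at h
  split_ifs at h
  exacts [s.injective h, h]

theorem parityFDS_congr (he : D (e v) v) {x y : Fin n → Fin q} (hxy : ∀ u, D u v → x u = y u) :
    parityFDS D e z s x v = parityFDS D e z s y v := by
  classical
  have hcount : univ.filter (fun u => D u v ∧ u ≠ e v ∧ x u = z) =
      univ.filter (fun u => D u v ∧ u ≠ e v ∧ y u = z) :=
    filter_congr fun u _ => and_congr_right fun hD => by rw [hxy u hD]
  simp only [parityFDS, hcount, hxy _ he]

theorem exactIG_parityFDS (he : ∀ v, D (e v) v) (hs : s z = z) {a : Fin q} (ha : a ≠ z)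
    (hsa : s a ≠ a) : ExactIG D (parityFDS D e z s) := by
  classical
  intro u v
  refine ⟨fun ⟨x, y, hxy, hne⟩ => ?_, fun hD => ?_⟩
  · by_contra hD
    exact hne (parityFDS_congr (he v) fun w hw => hxy w (by rintro rfl; exact hD hw))
  -- Starting from the constant state `a`: changing `x_{e v}` to `s a` creates no zero, while
  -- setting another in-neighbour to `z` makes the count of zeros odd.
  rcases eq_or_ne u (e v) with rfl | hu
  · refine ⟨fun _ => a, update (fun _ => a) (e v) (s a),
      fun w hw => (update_of_ne hw (s a) fun _ => a).symm, ?_⟩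
    have hsaz : s a ≠ z := fun h => ha (s.injective (h.trans hs.symm))
    have hnz : ∀ w, update (fun _ => a) (e v) (s a) w ≠ z := fun w => by
      rcases eq_or_ne w (e v) with rfl | hw <;> simp [*]
    simpa [parityFDS, hnz, ha] using hsa.symm
  · refine ⟨fun _ => a, update (fun _ => a) u z,
      fun w hw => (update_of_ne hw z fun _ => a).symm, ?_⟩
    have hz : ∀ w, update (fun _ => a) u z w = z ↔ w = u := fun w => by
      rcases eq_or_ne w u with rfl | hw <;> simp [*]
    have hcount : univ.filter (fun w => D w v ∧ w ≠ e v ∧ update (fun _ => a) u z w = z) = {u} := by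
      ext w
      simp only [mem_filter, mem_univ, true_and, mem_singleton, hz]
      exact ⟨fun h => h.2.2, by rintro rfl; exact ⟨hD, hu, rfl⟩⟩
    simpa [parityFDS, hcount, update_of_ne hu.symm, ha] using hsa.symm

theorem exists_exactIG_bijective_of_perm (hq : 3 ≤ q) (he : ∀ v, D (e v) v) :
    ∃ f : (Fin n → Fin q) → Fin n → Fin q, ExactIG D f ∧ Bijective f := by
  let z : Fin q := ⟨0, by omega⟩
  let a : Fin q := ⟨1, by omega⟩
  let b : Fin q := ⟨2, by omega⟩
  have hs : Equiv.swap a b z = z := Equiv.swap_apply_of_ne_of_ne (by simp [z, a]) (by simp [z, b])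
  refine ⟨parityFDS D e z (Equiv.swap a b), exactIG_parityFDS he hs (a := a) (by simp [a, z]) ?_,
    Finite.injective_iff_bijective.1 (parityFDS_injective hs)⟩
  simp [a, b]

end ParityFDS

theorem reversible_block_sequential_general {n q : ℕ} (hq : 3 ≤ q)
    (D : Fin n → Fin n → Prop) :
    ((∃ f : (Fin n → Fin q) → Fin n → Fin q, ExactIG D f ∧ Function.Bijective f) ↔
      (∃ (f : (Fin n → Fin q) → Fin n → Fin q) (σ : List (Finset (Fin n))),
        ExactIG D f ∧ BlockSequential σ ∧ Function.Bijective (applySchedule f σ))) ∧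
    ((∃ (f : (Fin n → Fin q) → Fin n → Fin q) (σ : List (Finset (Fin n))),
        ExactIG D f ∧ BlockSequential σ ∧ Function.Bijective (applySchedule f σ)) ↔
      CoveredByDisjointCycles D) := by
  have h12 : (∃ f : (Fin n → Fin q) → Fin n → Fin q, ExactIG D f ∧ Bijective f) →
      ∃ (f : (Fin n → Fin q) → Fin n → Fin q) (σ : List (Finset (Fin n))),
        ExactIG D f ∧ BlockSequential σ ∧ Bijective (applySchedule f σ) :=
    fun ⟨f, hf, hbij⟩ => ⟨f, [univ], hf, blockSequential_singleton_univ, by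
      rwa [applySchedule_singleton_univ]⟩
  have h23 : (∃ (f : (Fin n → Fin q) → Fin n → Fin q) (σ : List (Finset (Fin n))),
        ExactIG D f ∧ BlockSequential σ ∧ Bijective (applySchedule f σ)) →
      CoveredByDisjointCycles D := fun ⟨f, σ, hf, hσ, hbij⟩ =>
    coveredByDisjointCycles_iff_exists_perm.2
      (exists_perm_of_bijective_applySchedule (by omega) (fun u v => (hf u v).1) hσ hbij)
  have h31 : CoveredByDisjointCycles D →
      ∃ f : (Fin n → Fin q) → Fin n → Fin q, ExactIG D f ∧ Bijective f := fun h =>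
    (coveredByDisjointCycles_iff_exists_perm.1 h).elim fun _ he =>
      exists_exactIG_bijective_of_perm hq he
  exact ⟨⟨h12, h31 ∘ h23⟩, ⟨h23, h12 ∘ h31⟩⟩

/-- for `q ≥ 3`, the following are equivalent: (1) `F[D,q]` contains a
permutation; (2) some `f ∈ F[D,q]` and block-sequential schedule `σ` give a permutation
`f^σ`; (3) all vertices of `D` can be covered by pairwise vertex-disjoint cycles. -/
theorem reversible_block_sequential {n q : ℕ} (hn : 1 ≤ n) (hq : 3 ≤ q)
    (D : Fin n → Fin n → Prop) :
    ((∃ f : (Fin n → Fin q) → Fin n → Fin q, ExactIG D f ∧ Function.Bijective f) ↔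
      (∃ (f : (Fin n → Fin q) → Fin n → Fin q) (σ : List (Finset (Fin n))),
        ExactIG D f ∧ BlockSequential σ ∧ Function.Bijective (applySchedule f σ))) ∧
    ((∃ (f : (Fin n → Fin q) → Fin n → Fin q) (σ : List (Finset (Fin n))),
        ExactIG D f ∧ BlockSequential σ ∧ Function.Bijective (applySchedule f σ)) ↔
      CoveredByDisjointCycles D) :=
  reversible_block_sequential_general hq D
end
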